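/- Fix an integer M ≥ 1, reals Ae > 0, 0 < z_th < Ae, r₀, r₁ ∈ (0,1) with r₀ + r₁ = 1, and μ > 0. For σ, σ₀ > 0 set x₁ = (z_th − Ae)/√(σ² + σ₀²/M) and x₂ = z_th/σ₀, and define the posterior probability q₁(σ,σ₀) = Q(x₁)·r₁ / (Q(x₁)·r₁ + Q(x₂)·r₀). Then H₂(q₁(σ,σ₀)) / (σ² + σ₀²/M)^μ → 0 as (σ, σ₀) → (0⁺, 0⁺) (Theorem 2, case N̂₁ = 1). -/

import Mathlib

open MeasureTheory Filter Real

/-- The Gaussian tail function `Q(x) = ∫_x^∞ (1/√(2π)) e^{−u²/2} du`. -/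
noncomputable def gaussQ (x : ℝ) : ℝ :=
  ∫ u in Set.Ioi x, (Real.sqrt (2 * Real.pi))⁻¹ * Real.exp (-u ^ 2 / 2)

/-- Binary entropy function. -/
noncomputable def H2 (x : ℝ) : ℝ := -x * Real.log x - (1 - x) * Real.log (1 - x)

/-!
Since `zth < Ae`, the argument of the first tail is nonpositive, so `Q(x₁) ≥ 1/2`, while the
Chernoff-type bound `Q(x) ≤ exp(-x²/2)/2` controls `Q(zth/σ₀)`. Hence
`1 - q₁ ≤ (r₀/r₁) exp(-zth²/(2σ₀²))`, and `H₂(q₁) = H₂(1 - q₁) ≤ 2√(1 - q₁)` is at most a constant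
times `exp(-zth²/(4σ₀²))`. The denominator is at least `(σ₀²/M)^μ`, and exponential decay in
`1/σ₀²` beats every power of `1/σ₀²`; the bound does not involve `σ` at all.
-/

open ProbabilityTheory Set Topology

lemma gaussQ_eq_setIntegral_gaussianPDFReal (x : ℝ) :
    gaussQ x = ∫ u in Ioi x, gaussianPDFReal 0 1 u := by
  simp [gaussQ, gaussianPDFReal]

lemma gaussQ_pos (x : ℝ) : 0 < gaussQ x := by
  rw [gaussQ_eq_setIntegral_gaussianPDFReal, setIntegral_pos_iff_support_of_nonneg_ae
    (.of_forall fun u => gaussianPDFReal_nonneg 0 1 u)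
    (integrable_gaussianPDFReal 0 1).integrableOn]
  simp [Function.support_eq_univ fun u => (gaussianPDFReal_pos 0 1 u one_ne_zero).ne']

lemma gaussQ_antitone : Antitone gaussQ := fun x y hxy => by
  simp only [gaussQ_eq_setIntegral_gaussianPDFReal]
  exact setIntegral_mono_set (integrable_gaussianPDFReal 0 1).integrableOn
    (.of_forall fun u => gaussianPDFReal_nonneg 0 1 u) (Ioi_subset_Ioi hxy).eventuallyLE

lemma gaussQ_zero : gaussQ 0 = 1 / 2 := by
  have h := integral_comp_abs (f := gaussianPDFReal 0 1)
  have heven (u : ℝ) : gaussianPDFReal 0 1 |u| = gaussianPDFReal 0 1 u := by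
    simp [gaussianPDFReal]
  rw [funext heven, integral_gaussianPDFReal_eq_one 0 one_ne_zero,
    ← gaussQ_eq_setIntegral_gaussianPDFReal] at h
  linarith

lemma half_le_gaussQ {x : ℝ} (hx : x ≤ 0) : 1 / 2 ≤ gaussQ x :=
  gaussQ_zero ▸ gaussQ_antitone hx

lemma setIntegral_Ioi_comp_add_right (f : ℝ → ℝ) (a c : ℝ) :
    ∫ x in Ioi a, f (x + c) = ∫ x in Ioi (a + c), f x := by
  rw [← (measurePreserving_add_right volume c).setIntegral_preimage_emb
    (measurableEmbedding_addRight c) f, preimage_add_const_Ioi, add_sub_cancel_right]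

lemma gaussianPDFReal_add_le {u x : ℝ} (hu : 0 ≤ u) (hx : 0 ≤ x) :
    gaussianPDFReal 0 1 (u + x) ≤ exp (-x ^ 2 / 2) * gaussianPDFReal 0 1 u := by
  simp only [gaussianPDFReal, sub_zero, NNReal.coe_one, mul_one]
  rw [mul_left_comm, ← exp_add]
  gcongr
  nlinarith [mul_nonneg hu hx]

lemma gaussQ_le_exp_neg_sq_div_two {x : ℝ} (hx : 0 ≤ x) : gaussQ x ≤ exp (-x ^ 2 / 2) / 2 := by
  have hshift := setIntegral_Ioi_comp_add_right (gaussianPDFReal 0 1) 0 x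
  rw [zero_add, ← gaussQ_eq_setIntegral_gaussianPDFReal] at hshift
  calc gaussQ x = ∫ u in Ioi 0, gaussianPDFReal 0 1 (u + x) := hshift.symm
    _ ≤ ∫ u in Ioi 0, exp (-x ^ 2 / 2) * gaussianPDFReal 0 1 u :=
      setIntegral_mono_on ((integrable_gaussianPDFReal 0 1).comp_add_right x).integrableOn
        ((integrable_gaussianPDFReal 0 1).const_mul _).integrableOn measurableSet_Ioi
        fun u hu => gaussianPDFReal_add_le (le_of_lt hu) hx
    _ = exp (-x ^ 2 / 2) / 2 := by
      rw [integral_const_mul, ← gaussQ_eq_setIntegral_gaussianPDFReal, gaussQ_zero]; ring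

lemma H2_eq_binEntropy : H2 = binEntropy := by
  ext p
  rw [H2, binEntropy, log_inv, log_inv]
  ring

lemma binEntropy_le_two_mul_sqrt {p : ℝ} (hp₀ : 0 ≤ p) (hp₁ : p ≤ 1) :
    binEntropy p ≤ 2 * √p := by
  have h₁ := negMulLog_le_one_sub_self (sqrt_nonneg p)
  have h₂ := negMulLog_le_one_sub_self (sub_nonneg.2 hp₁)
  rw [binEntropy_eq_negMulLog_add_negMulLog_one_sub]
  nth_rewrite 1 [← mul_self_sqrt hp₀]
  rw [negMulLog_mul]
  nlinarith [sqrt_nonneg p, mul_self_sqrt hp₀]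

lemma tendsto_inv_sq_rpow_mul_exp_neg_mul_inv_sq (μ : ℝ) {b : ℝ} (hb : 0 < b) :
    Tendsto (fun y : ℝ => ((y ^ 2)⁻¹) ^ μ * exp (-b * (y ^ 2)⁻¹)) (𝓝[>] 0) (𝓝 0) := by
  have h : Tendsto (fun y : ℝ => (y ^ 2)⁻¹) (𝓝[>] 0) atTop := by
    simpa only [Function.comp_def, inv_pow] using
      (tendsto_pow_atTop two_ne_zero).comp (tendsto_inv_nhdsGT_zero (𝕜 := ℝ))
  exact (tendsto_rpow_mul_exp_neg_mul_atTop_nhds_zero μ b hb).comp h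

lemma binEntropy_bayes_posterior_le {a b r0 r1 : ℝ} (hr0 : 0 ≤ r0) (hr1 : 0 < r1) (ha : 1 / 2 ≤ a)
    (hb : 0 ≤ b) : binEntropy (a * r1 / (a * r1 + b * r0)) ≤ 2 * √(2 * b * r0 / r1) := by
  have hD : r1 / 2 ≤ a * r1 + b * r0 := by nlinarith
  have hDpos : 0 < a * r1 + b * r0 := by linarith
  have hcompl : a * r1 / (a * r1 + b * r0) = 1 - b * r0 / (a * r1 + b * r0) := by
    field_simp
    ring
  rw [hcompl, binEntropy_one_sub]
  refine (binEntropy_le_two_mul_sqrt (by positivity)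
    (div_le_one_of_le₀ (by nlinarith) hDpos.le)).trans ?_
  gcongr 2 * √?_
  calc b * r0 / (a * r1 + b * r0) ≤ b * r0 / (r1 / 2) :=
        div_le_div_of_nonneg_left (by positivity) (by positivity) hD
    _ = 2 * b * r0 / r1 := by field_simp

section Posterior

variable (M : ℕ) (Ae zth r0 r1 : ℝ)

/-- The posterior `q₁(σ, σ₀)` of the paper. -/
noncomputable def detectionPosterior (σ σ₀ : ℝ) : ℝ :=
  gaussQ ((zth - Ae) / √(σ ^ 2 + σ₀ ^ 2 / M)) * r1 /
    (gaussQ ((zth - Ae) / √(σ ^ 2 + σ₀ ^ 2 / M)) * r1 + gaussQ (zth / σ₀) * r0)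

variable {M Ae zth r0 r1}

lemma binEntropy_detectionPosterior_nonneg (hr0 : 0 ≤ r0) (hr1 : 0 ≤ r1) (σ σ₀ : ℝ) :
    0 ≤ binEntropy (detectionPosterior M Ae zth r0 r1 σ σ₀) := by
  have := (gaussQ_pos (zth / σ₀)).le
  have := (gaussQ_pos ((zth - Ae) / √(σ ^ 2 + σ₀ ^ 2 / M))).le
  exact binEntropy_nonneg (by unfold detectionPosterior; positivity)
    (div_le_one_of_le₀ (by nlinarith) (by positivity))

lemma binEntropy_detectionPosterior_le (hz1 : 0 ≤ zth) (hz2 : zth ≤ Ae) (hr0 : 0 ≤ r0)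
    (hr1 : 0 < r1) (σ : ℝ) {σ₀ : ℝ} (hσ₀ : 0 < σ₀) :
    binEntropy (detectionPosterior M Ae zth r0 r1 σ σ₀) ≤
      2 * √(r0 / r1) * exp (-(zth ^ 2 / 4) * (σ₀ ^ 2)⁻¹) := by
  have ha := half_le_gaussQ (div_nonpos_of_nonpos_of_nonneg (sub_nonpos.2 hz2)
    (sqrt_nonneg (σ ^ 2 + σ₀ ^ 2 / M)))
  have hb := gaussQ_le_exp_neg_sq_div_two (div_nonneg hz1 hσ₀.le)
  refine (binEntropy_bayes_posterior_le hr0 hr1 ha (gaussQ_pos _).le).trans ?_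
  calc 2 * √(2 * gaussQ (zth / σ₀) * r0 / r1)
      ≤ 2 * √(r0 / r1 * exp (-(zth / σ₀) ^ 2 / 2)) := by
        rw [show 2 * gaussQ (zth / σ₀) * r0 / r1 = r0 / r1 * (2 * gaussQ (zth / σ₀)) by ring]
        gcongr
        linarith
    _ = 2 * √(r0 / r1) * exp (-(zth ^ 2 / 4) * (σ₀ ^ 2)⁻¹) := by
        rw [sqrt_mul (by positivity), ← exp_half, div_pow]
        ring_nf

lemma binEntropy_detectionPosterior_div_rpow_le (hM : 0 < M) (hz1 : 0 ≤ zth) (hz2 : zth ≤ Ae)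
    (hr0 : 0 ≤ r0) (hr1 : 0 < r1) {μ : ℝ} (hμ : 0 ≤ μ) (σ : ℝ) {σ₀ : ℝ} (hσ₀ : 0 < σ₀) :
    binEntropy (detectionPosterior M Ae zth r0 r1 σ σ₀) / (σ ^ 2 + σ₀ ^ 2 / M) ^ μ ≤
      2 * √(r0 / r1) * (M : ℝ) ^ μ * (((σ₀ ^ 2)⁻¹) ^ μ * exp (-(zth ^ 2 / 4) * (σ₀ ^ 2)⁻¹)) := by
  have hM' : (0 : ℝ) < M := Nat.cast_pos.2 hM
  calc binEntropy (detectionPosterior M Ae zth r0 r1 σ σ₀) / (σ ^ 2 + σ₀ ^ 2 / M) ^ μ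
      ≤ 2 * √(r0 / r1) * exp (-(zth ^ 2 / 4) * (σ₀ ^ 2)⁻¹) / (σ₀ ^ 2 / M) ^ μ :=
        div_le_div₀ (by positivity) (binEntropy_detectionPosterior_le hz1 hz2 hr0 hr1 σ hσ₀)
          (by positivity) (rpow_le_rpow (by positivity) (by nlinarith) hμ)
    _ = _ := by
        rw [div_rpow (by positivity) hM'.le, inv_rpow (by positivity)]
        have := (rpow_pos_of_pos (pow_pos hσ₀ 2) μ).ne'
        have := (rpow_pos_of_pos hM' μ).ne'
        field_simp

end Posterior

theorem stmt_4_general (M : ℕ) (hM : 1 ≤ M) (Ae zth r0 r1 μ : ℝ)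
    (hz1 : 0 < zth) (hz2 : zth < Ae)
    (hr0 : r0 ∈ Set.Ioo (0 : ℝ) 1) (hr1 : r1 ∈ Set.Ioo (0 : ℝ) 1)
    (hμ : 0 < μ) :
    Tendsto (fun p : ℝ × ℝ =>
        H2 (gaussQ ((zth - Ae) / Real.sqrt (p.1 ^ 2 + p.2 ^ 2 / M)) * r1 /
            (gaussQ ((zth - Ae) / Real.sqrt (p.1 ^ 2 + p.2 ^ 2 / M)) * r1 +
              gaussQ (zth / p.2) * r0)) /
          (p.1 ^ 2 + p.2 ^ 2 / M) ^ μ)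
      ((nhdsWithin 0 (Set.Ioi 0)) ×ˢ (nhdsWithin 0 (Set.Ioi 0))) (nhds 0) := by
  have hdecay := tendsto_inv_sq_rpow_mul_exp_neg_mul_inv_sq μ (by positivity : 0 < zth ^ 2 / 4)
  have hbound := (hdecay.const_mul (2 * √(r0 / r1) * (M : ℝ) ^ μ)).comp
    (tendsto_snd (f := 𝓝[>] (0 : ℝ)))
  rw [mul_zero] at hbound
  rw [H2_eq_binEntropy]
  refine squeeze_zero' ?_ ?_ hbound
  · filter_upwards with p
    exact div_nonneg (binEntropy_detectionPosterior_nonneg hr0.1.le hr1.1.le p.1 p.2)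
      (rpow_nonneg (by positivity) μ)
  · filter_upwards [eventually_mem_nhdsWithin.prod_inr _] with p hp
    exact binEntropy_detectionPosterior_div_rpow_le hM hz1.le hz2.le hr0.1.le hr1.1 hμ.le p.1 hp

theorem stmt_4 (M : ℕ) (hM : 1 ≤ M) (Ae zth r0 r1 μ : ℝ)
    (hAe : 0 < Ae) (hz1 : 0 < zth) (hz2 : zth < Ae)
    (hr0 : r0 ∈ Set.Ioo (0 : ℝ) 1) (hr1 : r1 ∈ Set.Ioo (0 : ℝ) 1)
    (hsum : r0 + r1 = 1) (hμ : 0 < μ) :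
    Tendsto (fun p : ℝ × ℝ =>
        H2 (gaussQ ((zth - Ae) / Real.sqrt (p.1 ^ 2 + p.2 ^ 2 / M)) * r1 /
            (gaussQ ((zth - Ae) / Real.sqrt (p.1 ^ 2 + p.2 ^ 2 / M)) * r1 +
              gaussQ (zth / p.2) * r0)) /
          (p.1 ^ 2 + p.2 ^ 2 / M) ^ μ)
      ((nhdsWithin 0 (Set.Ioi 0)) ×ˢ (nhdsWithin 0 (Set.Ioi 0))) (nhds 0) :=
  stmt_4_general M hM Ae zth r0 r1 μ hz1 hz2 hr0 hr1 hμ
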